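/- arXiv:1806.03868 — 5 statements merged into one kernel-verified Lean document; each statement's English description precedes it below -/
import Mathlib

section
/- Let V be an m-ordered polynomial stochastic operator. Then V is surjective on B_1^+ (the set of nonnegative summable sequences with sum ≤ 1) if and only if V is surjective on the simplex S (nonnegative sequences with sum = 1). -/
/-- The m-ordered polynomial operator associated to a hypermatrix `P`. -/
noncomputable def psoV (m : ℕ) (P : (Fin m → ℕ) → ℕ → ℝ) (x : ℕ → ℝ) (k : ℕ) : ℝ :=
  ∑' i : Fin m → ℕ, P i k * ∏ j, x (i j)

/-- The hypermatrix is stochastic. -/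
def IsStochastic (m : ℕ) (P : (Fin m → ℕ) → ℕ → ℝ) : Prop :=
  (∀ i k, 0 ≤ P i k) ∧ ∀ i, HasSum (fun k => P i k) 1

/-- symmetry of the hypermatrix in its first m indices. -/
def HypSymm (m : ℕ) (P : (Fin m → ℕ) → ℕ → ℝ) : Prop :=
  ∀ (σ : Equiv.Perm (Fin m)) (i : Fin m → ℕ) (k : ℕ), P (i ∘ σ) k = P i k

/-- membership in the infinite-dimensional simplex S. -/
def inS (x : ℕ → ℝ) : Prop := (∀ i, 0 ≤ x i) ∧ HasSum x 1

/-- the standard basis vector e_i. -/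
def stdBasis (i : ℕ) : ℕ → ℝ := fun n => if n = i then 1 else 0

/-- x and y are orthogonal: disjoint supports. -/
def Orth (x y : ℕ → ℝ) : Prop := ∀ k, x k * y k = 0

/-- V is orthogonal preserving on S. -/
def IsOP (m : ℕ) (P : (Fin m → ℕ) → ℕ → ℝ) : Prop :=
  ∀ x y : ℕ → ℝ, inS x → inS y → Orth x y → Orth (psoV m P x) (psoV m P y)

/-- V is surjective on S. -/
def SurjOnS (m : ℕ) (P : (Fin m → ℕ) → ℕ → ℝ) : Prop :=
  ∀ y : ℕ → ℝ, inS y → ∃ x : ℕ → ℝ, inS x ∧ psoV m P x = y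

/-- membership in B_1^+. -/
def inB (x : ℕ → ℝ) : Prop := (∀ i, 0 ≤ x i) ∧ ∃ r : ℝ, r ≤ 1 ∧ HasSum x r

/-!
`V` maps a nonnegative family of mass `r` to one of mass `r ^ m`, and is homogeneous of degree
`m`. So a preimage in `B₁⁺` of a point of `S` has mass `1`, i.e. lies in `S`; conversely a point
of `B₁⁺` of mass `r` is `r • y'` with `y' ∈ S`, and if `V x' = y'` then `V (r ^ (1 / m) • x') = y`.
-/

open Finset

theorem hasSum_prod_pi_of_nonneg {ι : Type*} {x : ι → ℝ} {r : ℝ} (hx : 0 ≤ x)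
    (h : HasSum x r) (m : ℕ) : HasSum (fun i : Fin m → ι => ∏ j, x (i j)) (r ^ m) := by
  induction m with
  | zero => simp
  | succ n ih =>
    have hprod_nonneg : 0 ≤ fun i : Fin n → ι => ∏ j, x (i j) :=
      fun i => prod_nonneg fun j _ => hx (i j)
    have hsum := h.summable.mul_of_nonneg ih.summable hx hprod_nonneg
    have hcons : (fun i : Fin (n + 1) → ι => ∏ j, x (i j)) ∘ Fin.consEquiv (fun _ => ι) =
        fun p => x p.1 * ∏ j, x (p.2 j) := by
      funext p
      simp [Fin.consEquiv, Fin.prod_univ_succ]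
    rw [pow_succ', ← (Fin.consEquiv fun _ => ι).hasSum_iff, hcons]
    exact (h.mul ih hsum :)

theorem inS.inB {x : ℕ → ℝ} (hx : inS x) : inB x := ⟨hx.1, 1, le_rfl, hx.2⟩

theorem inS_stdBasis (i : ℕ) : inS (stdBasis i) :=
  ⟨fun n => by unfold stdBasis; split_ifs <;> norm_num, hasSum_ite_eq i 1⟩

theorem inB_smul {x : ℕ → ℝ} (hx : inS x) {s : ℝ} (hs0 : 0 ≤ s) (hs1 : s ≤ 1) : inB (s • x) :=
  ⟨fun n => mul_nonneg hs0 (hx.1 n), s, hs1, by simpa [Pi.smul_def] using hx.2.mul_left s⟩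

theorem exists_smul_inS_of_inB {y : ℕ → ℝ} (hy : inB y) :
    ∃ (r : ℝ) (y' : ℕ → ℝ), 0 ≤ r ∧ r ≤ 1 ∧ inS y' ∧ y = r • y' := by
  obtain ⟨hy0, r, hr1, hyr⟩ := hy
  obtain rfl | hr := (hyr.nonneg hy0).eq_or_lt
  · exact ⟨0, stdBasis 0, le_rfl, zero_le_one, inS_stdBasis 0, by
      simpa using (hasSum_zero_iff_of_nonneg hy0).1 hyr⟩
  refine ⟨r, r⁻¹ • y, hr.le, hr1, ⟨fun n => mul_nonneg (inv_nonneg.2 hr.le) (hy0 n), ?_⟩, ?_⟩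
  · simpa [Pi.smul_def, inv_mul_cancel₀ hr.ne'] using hyr.mul_left r⁻¹
  · rw [smul_smul, mul_inv_cancel₀ hr.ne', one_smul]

section Stochastic

variable {m : ℕ} {P : (Fin m → ℕ) → ℕ → ℝ}

theorem psoV_smul (c : ℝ) (x : ℕ → ℝ) : psoV m P (c • x) = c ^ m • psoV m P x := by
  funext k
  simp only [psoV, Pi.smul_apply, smul_eq_mul, prod_mul_distrib, prod_const, card_univ,
    Fintype.card_fin, ← tsum_mul_left]
  congr 1 with i
  ring

theorem IsStochastic.hasSum_psoV (hP : IsStochastic m P) {x : ℕ → ℝ} {r : ℝ}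
    (hx : 0 ≤ x) (h : HasSum x r) : HasSum (psoV m P x) (r ^ m) := by
  set F : (Fin m → ℕ) × ℕ → ℝ := fun p => P p.1 p.2 * ∏ j, x (p.1 j)
  have hfiber (i : Fin m → ℕ) : HasSum (fun k => F (i, k)) (∏ j, x (i j)) := by
    simpa [F] using (hP.2 i).mul_right (∏ j, x (i j))
  have hprod := hasSum_prod_pi_of_nonneg hx h m
  have hF0 : 0 ≤ F := fun p => mul_nonneg (hP.1 _ _) (prod_nonneg fun j _ => hx _)
  have hFsum : Summable F := (summable_prod_of_nonneg hF0).2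
    ⟨fun i => (hfiber i).summable, by simpa only [(hfiber _).tsum_eq] using hprod.summable⟩
  have hF : HasSum F (r ^ m) := by
    obtain ⟨a, ha⟩ := hFsum
    rwa [(ha.prod_fiberwise hfiber).unique hprod] at ha
  exact ((Equiv.prodComm ℕ _).hasSum_iff.2 hF).prod_fiberwise fun k =>
    (hFsum.prod_symm.prod_factor k).hasSum

theorem IsStochastic.inS_of_inB_of_inS_psoV (hP : IsStochastic m P) (hm : m ≠ 0)
    {x : ℕ → ℝ} (hx : inB x) (hVx : inS (psoV m P x)) : inS x := by
  obtain ⟨hx0, r, hr1, hxr⟩ := hx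
  have hrm : r ^ m = 1 := (hP.hasSum_psoV hx0 hxr).unique hVx.2
  rw [pow_eq_one_iff_of_nonneg (hxr.nonneg hx0) hm] at hrm
  exact ⟨hx0, hrm ▸ hxr⟩

end Stochastic

theorem stmt1 (m : ℕ) (hm : 1 ≤ m) (P : (Fin m → ℕ) → ℕ → ℝ)
    (hP : IsStochastic m P) :
    (∀ y : ℕ → ℝ, inB y → ∃ x : ℕ → ℝ, inB x ∧ psoV m P x = y) ↔ SurjOnS m P := by
  have hm0 : m ≠ 0 := Nat.one_le_iff_ne_zero.1 hm
  constructor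
  · intro hB y hy
    obtain ⟨x, hx, rfl⟩ := hB y hy.inB
    exact ⟨x, hP.inS_of_inB_of_inS_psoV hm0 hx hy, rfl⟩
  · intro hS y hy
    obtain ⟨r, y', hr0, hr1, hy', rfl⟩ := exists_smul_inS_of_inB hy
    obtain ⟨x', hx', rfl⟩ := hS y' hy'
    have hs1 : r ^ ((m : ℝ)⁻¹) ≤ 1 := Real.rpow_le_one hr0 hr1 (by positivity)
    refine ⟨r ^ ((m : ℝ)⁻¹) • x', inB_smul hx' (by positivity) hs1, ?_⟩
    rw [psoV_smul, Real.rpow_inv_natCast_pow hr0 hm0]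
end

section
/- Let V be an m-ordered PSO with V(e_i) = e_i for all i ∈ ℕ. If P_{i_1...i_m,k} = 0 whenever k ∉ {i_1,...,i_m}, then V is orthogonal preserving, i.e., x ⊥ y implies V(x) ⊥ V(y) for all x, y ∈ S. -/
/-! A coordinate `k` of `V(x)` collects only monomials `x_{i_1} ⋯ x_{i_m}` with `k ∈ {i_1, …, i_m}`,
so `x_k = 0` forces `V(x)_k = 0`: the support of `V(x)` lies in that of `x`, and disjoint supports
stay disjoint. -/

section

variable {m : ℕ} {P : (Fin m → ℕ) → ℕ → ℝ}

theorem psoV_apply_eq_zero (hzero : ∀ (i : Fin m → ℕ) (k : ℕ), (∀ j, i j ≠ k) → P i k = 0)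
    {x : ℕ → ℝ} {k : ℕ} (hx : x k = 0) : psoV m P x k = 0 := by
  refine (tsum_congr fun i => ?_).trans tsum_zero
  by_cases hk : ∀ j, i j ≠ k
  · rw [hzero i k hk, zero_mul]
  · obtain ⟨j, hj⟩ := not_forall_not.mp hk
    rw [Finset.prod_eq_zero (Finset.mem_univ j) (by rw [hj, hx]), mul_zero]

theorem Orth.psoV (hzero : ∀ (i : Fin m → ℕ) (k : ℕ), (∀ j, i j ≠ k) → P i k = 0)
    {x y : ℕ → ℝ} (hxy : Orth x y) : Orth (psoV m P x) (psoV m P y) := fun k =>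
  (mul_eq_zero.mp (hxy k)).elim
    (fun hx => by rw [psoV_apply_eq_zero hzero hx, zero_mul])
    (fun hy => by rw [psoV_apply_eq_zero hzero hy, mul_zero])

end

theorem stmt3_general (m : ℕ) (P : (Fin m → ℕ) → ℕ → ℝ)
    (hzero : ∀ (i : Fin m → ℕ) (k : ℕ), (∀ j, i j ≠ k) → P i k = 0) :
    IsOP m P :=
  fun _ _ _ _ hxy => hxy.psoV hzero

theorem stmt3 (m : ℕ) (hm : 1 ≤ m) (P : (Fin m → ℕ) → ℕ → ℝ)
    (hP : IsStochastic m P) (hsym : HypSymm m P)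
    (hfix : ∀ i : ℕ, psoV m P (stdBasis i) = stdBasis i)
    (hzero : ∀ (i : Fin m → ℕ) (k : ℕ), (∀ j, i j ≠ k) → P i k = 0) :
    IsOP m P :=
  stmt3_general m P hzero
end

section
/- Let V be an m-ordered PSO and suppose x ∈ S satisfies V(x) = e_k for some k ∈ ℕ. Then P_{i_1...i_m,k} = 1 for all i_1,...,i_m in supp(x), and consequently V(y) = e_k for every y ∈ S with supp(y) ⊂ supp(x). -/
/-! Every entry `P_{i,k}` is at most `1`, so `V(x)_k = ∑ P_{i,k} ∏ x_{i_j}` is at most the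
total mass `∑ ∏ x_{i_j} = (∑ x_n)^m = 1`. Equality forces `P_{i,k} = 1` on every multi-index
with positive weight, i.e. on `supp(x)^m`; stochasticity then makes that whole row `e_k`.
A `y` supported in `supp(x)` only puts weight on such rows, so `V(y) = e_k`. -/

theorem hasSum_prod_pi {α : Type*} {x : α → ℝ} {a : ℝ} (hx0 : ∀ i, 0 ≤ x i) (hx : HasSum x a)
    (m : ℕ) : HasSum (fun i : Fin m → α => ∏ j, x (i j)) (a ^ m) := by
  induction m with
  | zero =>
    simp only [Finset.univ_eq_empty, Finset.prod_empty, pow_zero]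
    exact hasSum_single default fun b hb => (hb (Subsingleton.elim b default)).elim
  | succ m ih =>
    have hsum : Summable fun z : α × (Fin m → α) => x z.1 * ∏ j, x (z.2 j) :=
      Summable.mul_of_nonneg (g := fun i : Fin m → α => ∏ j, x (i j)) hx.summable ih.summable
        hx0 fun _ => Finset.prod_nonneg fun _ _ => hx0 _
    have hcons : ((fun i : Fin (m + 1) → α => ∏ j, x (i j)) ∘ Fin.consEquiv fun _ => α) =
        fun z => x z.1 * ∏ j, x (z.2 j) := by
      funext z
      simp [Fin.consEquiv, Fin.prod_univ_succ]
    rw [← (Fin.consEquiv fun _ => α).hasSum_iff, hcons, pow_succ']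
    exact HasSum.mul (f := x) (g := fun i : Fin m → α => ∏ j, x (i j)) hx ih hsum

theorem inS.hasSum_prod {x : ℕ → ℝ} (hx : inS x) (m : ℕ) :
    HasSum (fun i : Fin m → ℕ => ∏ j, x (i j)) 1 := by
  simpa using hasSum_prod_pi hx.1 hx.2 m

theorem eq_one_of_hasSum_mul_of_le_one {β : Type*} {f w : β → ℝ} {s : ℝ} (hw0 : ∀ i, 0 ≤ w i)
    (hf1 : ∀ i, f i ≤ 1) (hw : HasSum w s) (hfw : HasSum (fun i => f i * w i) s) {i : β}
    (hwi : w i ≠ 0) : f i = 1 := by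
  have hdefect_nonneg : ∀ i, 0 ≤ w i - f i * w i := fun i => by
    nlinarith [hw0 i, hf1 i]
  have hdefect : (fun i => w i - f i * w i) = 0 :=
    (hasSum_zero_iff_of_nonneg hdefect_nonneg).1 (by simpa using hw.sub hfw)
  have hi := congrFun hdefect i
  have hmul : (1 - f i) * w i = 0 := by simp only [Pi.zero_apply] at hi; linarith
  linarith [(mul_eq_zero.1 hmul).resolve_right hwi]

namespace IsStochastic

variable {m : ℕ} {P : (Fin m → ℕ) → ℕ → ℝ}

theorem le_one (hP : IsStochastic m P) (i : Fin m → ℕ) (k : ℕ) : P i k ≤ 1 :=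
  le_hasSum (hP.2 i) k fun n _ => hP.1 i n

theorem eq_stdBasis_of_eq_one (hP : IsStochastic m P) {i : Fin m → ℕ} {k : ℕ} (hik : P i k = 1) :
    P i = stdBasis k := by
  funext n
  by_cases hn : n = k
  · simp [stdBasis, hn, hik]
  · have hpair := sum_le_hasSum {n, k} (fun b _ => hP.1 i b) (hP.2 i)
    rw [Finset.sum_pair hn, hik] at hpair
    simp only [stdBasis, hn, if_false]
    linarith [hP.1 i n]

theorem hasSum_psoV_s7 (hP : IsStochastic m P) {x : ℕ → ℝ} (hx : inS x) (k : ℕ) :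
    HasSum (fun i : Fin m → ℕ => P i k * ∏ j, x (i j)) (psoV m P x k) := by
  have hprod_nonneg : ∀ i : Fin m → ℕ, 0 ≤ ∏ j, x (i j) := fun i =>
    Finset.prod_nonneg fun _ _ => hx.1 _
  refine (Summable.of_nonneg_of_le (fun i => mul_nonneg (hP.1 i k) (hprod_nonneg i))
    (fun i => ?_) (hx.hasSum_prod m).summable).hasSum
  exact mul_le_of_le_one_left (hprod_nonneg i) (hP.le_one i k)

end IsStochastic

theorem stmt7_general (m : ℕ) (P : (Fin m → ℕ) → ℕ → ℝ)
    (hP : IsStochastic m P) (x : ℕ → ℝ) (hx : inS x) (k : ℕ)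
    (hV : psoV m P x = stdBasis k) :
    (∀ i : Fin m → ℕ, (∀ j, 0 < x (i j)) → P i k = 1) ∧
    (∀ y : ℕ → ℝ, inS y → (∀ n, x n = 0 → y n = 0) → psoV m P y = stdBasis k) := by
  have hrow : ∀ i : Fin m → ℕ, (∀ j, 0 < x (i j)) → P i k = 1 := by
    intro i hpos
    refine eq_one_of_hasSum_mul_of_le_one (fun i => Finset.prod_nonneg fun _ _ => hx.1 _)
      (fun i => hP.le_one i k) (hx.hasSum_prod m) ?_ (Finset.prod_pos fun j _ => hpos j).ne'
    simpa [hV, stdBasis] using hP.hasSum_psoV_s7 hx k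
  refine ⟨hrow, fun y hy hsupp => funext fun n => ?_⟩
  have hterm : ∀ i : Fin m → ℕ, P i n * ∏ j, y (i j) = stdBasis k n * ∏ j, y (i j) := by
    intro i
    by_cases hy0 : ∏ j, y (i j) = 0
    · simp [hy0]
    · have hpos : ∀ j, 0 < x (i j) := fun j => (hx.1 _).lt_of_ne' fun hx0 =>
        Finset.prod_ne_zero_iff.1 hy0 j (Finset.mem_univ j) (hsupp _ hx0)
      rw [hP.eq_stdBasis_of_eq_one (hrow i hpos)]
  simp only [psoV, hterm, tsum_mul_left, (hy.hasSum_prod m).tsum_eq, mul_one]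

theorem stmt7 (m : ℕ) (hm : 1 ≤ m) (P : (Fin m → ℕ) → ℕ → ℝ)
    (hP : IsStochastic m P) (x : ℕ → ℝ) (hx : inS x) (k : ℕ)
    (hV : psoV m P x = stdBasis k) :
    (∀ i : Fin m → ℕ, (∀ j, 0 < x (i j)) → P i k = 1) ∧
    (∀ y : ℕ → ℝ, inS y → (∀ n, x n = 0 → y n = 0) → psoV m P y = stdBasis k) :=
  stmt7_general m P hP x hx k hV
end

section
/- Let V be a surjective m-ordered PSO on S with V(e_i) = e_i for all i ∈ ℕ. Then V^{-1}(e_i) = {e_i} for every i ∈ ℕ, i.e., the only preimage of each vertex is the vertex itself. -/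
/-!
If `V x = e_i` and `x_a > 0` for some `a ≠ i`, then, all terms of the series being
nonnegative, `V(x)_a ≥ P_{a…a,a} x_a^m`. Since `V(e_a) = e_a` forces `P_{a…a,a} = 1`, this gives
`V(x)_a ≥ x_a^m > 0`, contradicting `V(x)_a = 0`. Hence `x` is supported on `{i}`, so `x = e_i`.
-/

-- `s` sits inside the box `tᵐ` of the indices it uses, and the sum over the box is `(∑_{n ∈ t} x n)^m`.
lemma sum_prod_le_pow_of_hasSum {m : ℕ} {x : ℕ → ℝ} {c : ℝ} (hx₀ : ∀ n, 0 ≤ x n)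
    (hx : HasSum x c) (s : Finset (Fin m → ℕ)) :
    ∑ f ∈ s, ∏ j, x (f j) ≤ c ^ m := by
  classical
  set t : Finset ℕ := s.biUnion fun f => Finset.image f Finset.univ
  have hs : s ⊆ Fintype.piFinset fun _ : Fin m => t := fun f hf =>
    Fintype.mem_piFinset.2 fun j =>
      Finset.mem_biUnion.2 ⟨f, hf, Finset.mem_image_of_mem f (Finset.mem_univ j)⟩
  calc ∑ f ∈ s, ∏ j, x (f j)
      ≤ ∑ f ∈ Fintype.piFinset fun _ : Fin m => t, ∏ j, x (f j) :=
        Finset.sum_le_sum_of_subset_of_nonneg hs fun f _ _ =>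
          Finset.prod_nonneg fun j _ => hx₀ _
    _ = (∑ n ∈ t, x n) ^ m := by
        rw [← Finset.prod_univ_sum, Finset.prod_const, Finset.card_univ, Fintype.card_fin]
    _ ≤ c ^ m := pow_le_pow_left₀ (Finset.sum_nonneg fun n _ => hx₀ n)
        (sum_le_hasSum t (fun n _ => hx₀ n) hx) m

lemma summable_prod_of_inS {m : ℕ} {x : ℕ → ℝ} (hx : inS x) :
    Summable fun f : Fin m → ℕ => ∏ j, x (f j) :=
  summable_of_sum_le (fun _ => Finset.prod_nonneg fun _ _ => hx.1 _)
    fun s => (sum_prod_le_pow_of_hasSum hx.1 hx.2 s).trans_eq (one_pow m)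

lemma IsStochastic.le_one_s11 {m : ℕ} {P : (Fin m → ℕ) → ℕ → ℝ} (hP : IsStochastic m P)
    (f : Fin m → ℕ) (k : ℕ) : P f k ≤ 1 :=
  le_hasSum (hP.2 f) k fun j _ => hP.1 f j

lemma IsStochastic.mul_prod_le_psoV {m : ℕ} {P : (Fin m → ℕ) → ℕ → ℝ} (hP : IsStochastic m P)
    {x : ℕ → ℝ} (hx : inS x) (f : Fin m → ℕ) (k : ℕ) :
    P f k * ∏ j, x (f j) ≤ psoV m P x k := by
  have hterm : ∀ g : Fin m → ℕ, 0 ≤ P g k * ∏ j, x (g j) := fun g =>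
    mul_nonneg (hP.1 g k) (Finset.prod_nonneg fun j _ => hx.1 _)
  have hsum : Summable fun g : Fin m → ℕ => P g k * ∏ j, x (g j) :=
    (summable_prod_of_inS hx).of_nonneg_of_le hterm fun g =>
      mul_le_of_le_one_left (Finset.prod_nonneg fun j _ => hx.1 _) (hP.le_one_s11 g k)
  exact hsum.le_tsum f fun g _ => hterm g

lemma psoV_stdBasis (m : ℕ) (P : (Fin m → ℕ) → ℕ → ℝ) (a k : ℕ) :
    psoV m P (stdBasis a) k = P (fun _ => a) k := by
  rw [psoV, tsum_eq_single fun _ => a]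
  · simp [stdBasis]
  · intro f hf
    obtain ⟨j, hj⟩ : ∃ j, f j ≠ a := by
      by_contra! h
      exact hf (funext h)
    rw [Finset.prod_eq_zero (Finset.mem_univ j) (by simp [stdBasis, hj]), mul_zero]

lemma eq_stdBasis_of_inS {x : ℕ → ℝ} (hx : inS x) {i : ℕ} (hzero : ∀ a, a ≠ i → x a = 0) :
    x = stdBasis i := by
  have hsupp : x = fun n => if n = i then x i else 0 := by
    funext n
    split_ifs with hn
    · rw [hn]
    · exact hzero n hn
  have hxi : x i = 1 := (hasSum_ite_eq i (x i)).unique (hsupp ▸ hx.2)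
  rw [hsupp, hxi]
  rfl

theorem stmt11_general (m : ℕ) (P : (Fin m → ℕ) → ℕ → ℝ)
    (hP : IsStochastic m P)
    (hfix : ∀ i : ℕ, psoV m P (stdBasis i) = stdBasis i) :
    ∀ i : ℕ, ∀ x : ℕ → ℝ, inS x → (psoV m P x = stdBasis i ↔ x = stdBasis i) := by
  intro i x hx
  refine ⟨fun hV => eq_stdBasis_of_inS hx fun a ha => ?_, fun h => h ▸ hfix i⟩
  have hdiag : P (fun _ => a) a = 1 := by
    simpa [psoV_stdBasis, stdBasis] using congrFun (hfix a) a
  have hle : x a ^ m ≤ 0 := by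
    simpa [hdiag, hV, stdBasis, ha] using hP.mul_prod_le_psoV hx (fun _ => a) a
  by_contra hxa
  have : 0 < x a ^ m := pow_pos (lt_of_le_of_ne (hx.1 a) (Ne.symm hxa)) m
  linarith

theorem stmt11 (m : ℕ) (hm : 1 ≤ m) (P : (Fin m → ℕ) → ℕ → ℝ)
    (hP : IsStochastic m P) (hsur : SurjOnS m P)
    (hfix : ∀ i : ℕ, psoV m P (stdBasis i) = stdBasis i) :
    ∀ i : ℕ, ∀ x : ℕ → ℝ, inS x → (psoV m P x = stdBasis i ↔ x = stdBasis i) :=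
  stmt11_general m P hP hfix
end

section
/- Let m = 3 and define the hypermatrix P on ℕ by: P is symmetric in its first three indices, P_{i_1 i_2 k, k} = 1 if k ≥ max{i_1, i_2} and 0 if k < max{i_1,i_2}, and P_{i_1 i_2 i_3, k} = 0 if k ∉ {i_1,i_2,i_3}. Then the associated 3-ordered PSO V satisfies Σ_{k=1}^{n} (V(x))_k = (Σ_{k=1}^{n} x_k)^3 for every n ∈ ℕ and every x ∈ S; consequently V is surjective on S. -/
/-!
The hypotheses force `P i k = 1` if `k = max_j i_j` and `0` otherwise: symmetry moves a
coordinate equal to `k` into the last slot, and if no coordinate equals `k` the entry vanishes.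
Then the mass that `V(x)` puts on `{0, …, n-1}` is the mass that `x ⊗ x ⊗ x` puts on the box
`{0, …, n-1}³`, namely `(∑_{k<n} x_k)³`. For surjectivity, given `y ∈ S` with partial sums `T n`,
the increments of `n ↦ (T n)^(1/3)` form a point `x ∈ S` whose image has partial sums `T n`,
hence equals `y`.
-/

open Finset Filter Topology

def maxHypermatrix (m : ℕ) (i : Fin m → ℕ) : ℕ → ℝ :=
  Pi.single (univ.sup i) 1

theorem isStochastic_maxHypermatrix (m : ℕ) : IsStochastic m (maxHypermatrix m) :=
  ⟨fun i k => by rw [maxHypermatrix, Pi.single_apply]; positivity, fun i => hasSum_pi_single _ _⟩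

theorem psoV_maxHypermatrix_eq_sum (m : ℕ) (x : ℕ → ℝ) {k : ℕ} {s : Finset (Fin m → ℕ)}
    (hs : ∀ i, univ.sup i = k → i ∈ s) :
    psoV m (maxHypermatrix m) x k = ∑ i ∈ s with univ.sup i = k, ∏ j, x (i j) := by
  rw [psoV, sum_filter, tsum_eq_sum (s := s)]
  · refine sum_congr rfl fun i _ => ?_
    simp only [maxHypermatrix, Pi.single_apply, ite_mul, one_mul, zero_mul, eq_comm]
  · intro i hi
    simp only [maxHypermatrix, Pi.single_apply, ite_mul, one_mul, zero_mul]
    exact if_neg fun h => hi (hs i h.symm)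

theorem sum_range_psoV_maxHypermatrix {m : ℕ} (hm : m ≠ 0) (x : ℕ → ℝ) (n : ℕ) :
    ∑ k ∈ range n, psoV m (maxHypermatrix m) x k = (∑ k ∈ range n, x k) ^ m := by
  have : NeZero m := ⟨hm⟩
  set box := Fintype.piFinset fun _ : Fin m => range n
  have hbox : ∀ i, univ.sup i < n ↔ i ∈ box := by
    intro i
    obtain ⟨j, -, hj⟩ := exists_mem_eq_sup univ univ_nonempty i
    simp only [box, Fintype.mem_piFinset, mem_range]
    exact ⟨fun h j' => (le_sup (mem_univ j')).trans_lt h, fun h => hj ▸ h j⟩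
  calc ∑ k ∈ range n, psoV m (maxHypermatrix m) x k
      = ∑ k ∈ range n, ∑ i ∈ box with univ.sup i = k, ∏ j, x (i j) :=
        sum_congr rfl fun k hk => psoV_maxHypermatrix_eq_sum m x fun i hi =>
          (hbox i).1 (hi ▸ mem_range.1 hk)
    _ = ∑ i ∈ box, ∏ j, x (i j) :=
        sum_fiberwise_of_maps_to (fun i hi => mem_range.2 ((hbox i).2 hi)) _
    _ = (∑ k ∈ range n, x k) ^ m := by rw [← Fin.prod_const, prod_univ_sum]

theorem inS_sub_of_monotone {f : ℕ → ℝ} (hf : Monotone f) (h0 : f 0 = 0)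
    (h1 : Tendsto f atTop (𝓝 1)) : inS fun k => f (k + 1) - f k := by
  have hnonneg : ∀ k, 0 ≤ f (k + 1) - f k := fun k => sub_nonneg.2 (hf k.le_succ)
  refine ⟨hnonneg, (hasSum_iff_tendsto_nat_of_nonneg hnonneg 1).2 ?_⟩
  simpa only [sum_range_sub, h0, sub_zero] using h1

theorem surjOnS_of_sum_range_psoV_eq_pow {m : ℕ} {P : (Fin m → ℕ) → ℕ → ℝ} (hm : m ≠ 0)
    (hP : ∀ x, inS x → ∀ n, ∑ k ∈ range n, psoV m P x k = (∑ k ∈ range n, x k) ^ m) :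
    SurjOnS m P := by
  intro y hy
  have hpartial_nonneg : ∀ n, 0 ≤ ∑ k ∈ range n, y k := fun n => sum_nonneg fun k _ => hy.1 k
  set root : ℕ → ℝ := fun n => (∑ k ∈ range n, y k) ^ (m⁻¹ : ℝ)
  have hroot_mono : Monotone root := fun a b hab =>
    Real.rpow_le_rpow (hpartial_nonneg a)
      (sum_le_sum_of_subset_of_nonneg (range_mono hab) fun k _ _ => hy.1 k) (by positivity)
  have hroot_zero : root 0 = 0 := by simp [root, hm]
  have hroot_tendsto : Tendsto root atTop (𝓝 1) := by
    simpa using hy.2.tendsto_sum_nat.rpow_const (p := (m⁻¹ : ℝ)) (Or.inr (by positivity))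
  have hx := inS_sub_of_monotone hroot_mono hroot_zero hroot_tendsto
  have hpow : ∀ n, (∑ k ∈ range n, (root (k + 1) - root k)) ^ m = ∑ k ∈ range n, y k := by
    intro n
    rw [sum_range_sub, hroot_zero, sub_zero]
    exact Real.rpow_inv_natCast_pow (hpartial_nonneg n) hm
  refine ⟨_, hx, funext fun k => ?_⟩
  rw [← sum_range_succ_sub_sum (psoV m P _), hP _ hx, hP _ hx, hpow, hpow, sum_range_succ_sub_sum]

theorem eq_maxHypermatrix_three {P : (Fin 3 → ℕ) → ℕ → ℝ} (hsym : HypSymm 3 P)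
    (h1 : ∀ a b k : ℕ, a ≤ k → b ≤ k → P ![a, b, k] k = 1)
    (h2 : ∀ a b k : ℕ, (k < a ∨ k < b) → P ![a, b, k] k = 0)
    (h3 : ∀ (i : Fin 3 → ℕ) (k : ℕ), (∀ j, i j ≠ k) → P i k = 0) :
    P = maxHypermatrix 3 := by
  funext i k
  rw [maxHypermatrix, Pi.single_apply]
  by_cases hk : ∃ j, i j = k
  · obtain ⟨j, hj⟩ := hk
    set i' := i ∘ Equiv.swap j 2
    have hi' : i' = ![i' 0, i' 1, k] := by
      ext j'; fin_cases j' <;> simp [i', hj]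
    have hsup : k = univ.sup i ↔ i' 0 ≤ k ∧ i' 1 ≤ k := by
      rw [le_antisymm_iff, and_iff_right (hj ▸ le_sup (mem_univ j)), Finset.sup_le_iff]
      simp only [mem_univ, forall_const]
      rw [← (Equiv.swap j 2).forall_congr_right, Fin.forall_fin_succ, Fin.forall_fin_succ,
        Fin.forall_fin_one]
      simp [i', hj]
    rw [← hsym (Equiv.swap j 2)]
    change P i' k = _
    rw [hi']
    by_cases hle : i' 0 ≤ k ∧ i' 1 ≤ k
    · rw [h1 _ _ _ hle.1 hle.2, if_pos (hsup.2 hle)]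
    · rw [h2 _ _ _ (by omega), if_neg (mt hsup.1 hle)]
  · simp only [not_exists] at hk
    obtain ⟨j, -, hj⟩ := exists_mem_eq_sup univ univ_nonempty i
    rw [h3 i k hk, if_neg (fun h => hk j (hj ▸ h).symm)]

theorem stmt19 (P : (Fin 3 → ℕ) → ℕ → ℝ)
    (hsym : HypSymm 3 P)
    (h1 : ∀ a b k : ℕ, a ≤ k → b ≤ k → P ![a, b, k] k = 1)
    (h2 : ∀ a b k : ℕ, (k < a ∨ k < b) → P ![a, b, k] k = 0)
    (h3 : ∀ (i : Fin 3 → ℕ) (k : ℕ), (∀ j, i j ≠ k) → P i k = 0) :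
    IsStochastic 3 P ∧
    (∀ x : ℕ → ℝ, inS x → ∀ n : ℕ,
      ∑ k ∈ Finset.range n, psoV 3 P x k = (∑ k ∈ Finset.range n, x k) ^ 3) ∧
    SurjOnS 3 P := by
  obtain rfl := eq_maxHypermatrix_three hsym h1 h2 h3
  have hsum := fun x (_ : inS x) => sum_range_psoV_maxHypermatrix three_ne_zero x
  exact ⟨isStochastic_maxHypermatrix 3, hsum, surjOnS_of_sum_range_psoV_eq_pow three_ne_zero hsum⟩
end
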